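/- arXiv:gr-qc/0511014 — 8 statements merged into one kernel-verified Lean document; each statement's English description precedes it below -/
import Mathlib

section
/- Let g be a symmetric 4×4 complex matrix with det g ≠ 0, and write g = gR + i·gI where gR and gI are real 4×4 matrices. Then the area metric of g is real, i.e. Im(g a c · g d b − g a d · g c b) = 0 for all indices a, b, c, d, if and only if g is real (gI = 0) or g is purely imaginary (gR = 0). -/
/-!
For symmetric `g` the area metric is the array of 2×2 minors of `g`, so its reality says that
`conj g` and `g` have the same 2×2 minors. By Cauchy–Binet, `h = conj g * g⁻¹` then has the
2×2 minors of the identity: `h eᵢ ∧ h eⱼ = eᵢ ∧ eⱼ`. Hence `h eᵢ` lies in the plane `⟨eᵢ, eⱼ⟩`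
for every `j ≠ i`; with at least three indices this forces `h` to be diagonal, and
`hᵢᵢ hⱼⱼ = 1` for all `i ≠ j` forces `h = ±1`, i.e. `conj g = ±g`.
-/

open ComplexConjugate

namespace Matrix

variable {m n o R : Type*} [CommRing R]

def minor2 (A : Matrix m n R) (i j : m) (k l : n) : R :=
  A i k * A j l - A i l * A j k

theorem minor2_map {S : Type*} [CommRing S] (f : R →+* S) (A : Matrix m n R) (i j : m) (k l : n) :
    (A.map f).minor2 i j k l = f (A.minor2 i j k l) := by
  simp [minor2]

theorem minor2_mul [Fintype n] (A : Matrix m n R) (B : Matrix n o R) (i j : m) (k l : o) :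
    (A * B).minor2 i j k l = ∑ a, ∑ b, A.minor2 i j a b * B a k * B b l := by
  simp only [minor2, mul_apply, sub_mul, Finset.sum_sub_distrib, Finset.sum_mul_sum]
  rw [Finset.sum_comm (f := fun a b => A i b * A j a * B a k * B b l)]
  congr 1 <;> exact Finset.sum_congr rfl fun _ _ => Finset.sum_congr rfl fun _ _ => by ring

theorem minor2_mul_eq_of_minor2_eq [Fintype n] {A A' : Matrix m n R} (h : A.minor2 = A'.minor2)
    (B : Matrix n o R) : (A * B).minor2 = (A' * B).minor2 := by
  funext i j k l
  simp only [minor2_mul, h]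

section minor2_eq_one

variable [DecidableEq n] {h : Matrix n n R}

theorem apply_eq_zero_of_minor2_eq_one (hh : h.minor2 = minor2 1) {a i j : n} (hai : a ≠ i)
    (hja : j ≠ a) (hji : j ≠ i) : h a i = 0 := by
  -- `h eᵢ ∧ h eᵢ ∧ h eⱼ = 0`, read off in the coordinates `a, i, j`
  have expand :
      h a i * h.minor2 i j i j - h i i * h.minor2 a j i j + h j i * h.minor2 a i i j = 0 := by
    simp only [minor2]; ring
  rw [hh] at expand
  simpa [minor2, one_apply, hai, hja.symm, hji] using expand

theorem eq_one_or_eq_neg_one_of_minor2_eq_one [IsDomain R] (hn : 3 ≤ ENat.card n)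
    (hh : h.minor2 = minor2 1) : h = 1 ∨ h = -1 := by
  have off_diag : ∀ a i, a ≠ i → h a i = 0 := fun a i hai =>
    let ⟨_, hja, hji⟩ := ENat.exists_ne_ne_of_three_le hn a i
    apply_eq_zero_of_minor2_eq_one hh hai hja hji
  have diag_mul : ∀ i j, i ≠ j → h i i * h j j = 1 := by
    intro i j hij
    have hij_minor : h.minor2 i j i j = minor2 1 i j i j := by rw [hh]
    simpa [minor2, off_diag i j hij, hij, hij.symm, one_apply] using hij_minor
  have diag_eq : ∀ i j, h i i = h j j := by
    intro i j
    obtain ⟨k, hki, hkj⟩ := ENat.exists_ne_ne_of_three_le hn i j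
    exact mul_right_cancel₀ (right_ne_zero_of_mul_eq_one (diag_mul i k hki.symm))
      ((diag_mul i k hki.symm).trans (diag_mul j k hkj.symm).symm)
  have : Nontrivial n := (ENat.one_lt_card_iff_nontrivial n).mp (lt_of_lt_of_le (by norm_num) hn)
  obtain ⟨i, j, hij⟩ := exists_pair_ne n
  have hsq : h i i * h i i = 1 := diag_eq j i ▸ diag_mul i j hij
  have scalar : ∀ a b, h a b = (1 : Matrix n n R) a b * h i i := by
    intro a b
    rcases eq_or_ne a b with rfl | hab
    · simp [diag_eq a i]
    · simp [off_diag a b hab, hab]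
  rcases mul_self_eq_one_iff.mp hsq with hc | hc
  · left; ext a b; simp [scalar a b, hc]
  · right; ext a b; simp [scalar a b, hc]

end minor2_eq_one

end Matrix

open Matrix

theorem map_conj_eq_or_eq_neg_of_minor2_im_eq_zero {n : Type*} [Fintype n] [DecidableEq n]
    (hn : 3 ≤ ENat.card n) {g : Matrix n n ℂ} (hdet : g.det ≠ 0)
    (hreal : ∀ i j k l, (g.minor2 i j k l).im = 0) : g.map conj = g ∨ g.map conj = -g := by
  have hconj : (g.map conj).minor2 = g.minor2 := by
    funext i j k l
    rw [minor2_map]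
    exact Complex.conj_eq_iff_im.mpr (hreal i j k l)
  have hh : (g.map conj * g⁻¹).minor2 = minor2 1 := by
    rw [minor2_mul_eq_of_minor2_eq hconj, mul_nonsing_inv g hdet.isUnit]
  rw [← nonsing_inv_mul_cancel_right g (g.map conj) hdet.isUnit]
  rcases eq_one_or_eq_neg_one_of_minor2_eq_one hn hh with h1 | h1 <;> simp [h1]

/-- For a symmetric 4×4 complex matrix `g` with nonzero determinant,
the area metric `A a b c d = g a c * g d b - g a d * g c b` is real (entrywise
zero imaginary part) iff `g` is entrywise real or entrywise purely imaginary. -/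
theorem area_metric_real_iff_metric_real_or_imaginary
    (g : Matrix (Fin 4) (Fin 4) ℂ) (hsymm : g.IsSymm) (hdet : g.det ≠ 0) :
    (∀ a b c d : Fin 4, (g a c * g d b - g a d * g c b).im = 0) ↔
      ((∀ a b : Fin 4, (g a b).im = 0) ∨ (∀ a b : Fin 4, (g a b).re = 0)) := by
  have area_eq_minor2 : ∀ a b c d, g a c * g d b - g a d * g c b = g.minor2 a b c d := by
    intro a b c d
    rw [minor2, hsymm.apply b d, hsymm.apply b c]
  simp_rw [area_eq_minor2]
  constructor
  · intro H
    rcases map_conj_eq_or_eq_neg_of_minor2_im_eq_zero (by norm_num) hdet H with h | h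
    · exact .inl fun a b => Complex.conj_eq_iff_im.mp (congrFun₂ h a b)
    · refine .inr fun a b => ?_
      have := congrArg Complex.re (congrFun₂ h a b)
      simp only [map_apply, Complex.conj_re, Matrix.neg_apply, Complex.neg_re] at this
      linarith
  · rintro (H | H) a b c d <;> simp [minor2, Complex.mul_im, H]
end

section
/- Let g be a symmetric 4×4 complex matrix with det g ≠ 0, and write g = gR + i·gI. Then the area metric of g is real (Im(g a c · g d b − g a d · g c b) = 0 for all a, b, c, d) if and only if the cross-reality condition holds: gR a c · gI d b = gR a d · gI c b for all indices a, b, c, d. -/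
/-!
For symmetric `g` the area metric is the array of `2 × 2` minors of `g`, so it is real exactly
when the conjugate matrix `ḡ` has the same `2 × 2` minors as `g`. The minors of a product
depend only on the minors of the left factor, hence `B = ḡ g⁻¹` has the `2 × 2` minors of the
identity. In dimension at least three this forces `B = ±1`: every off-diagonal entry of `B`
vanishes, and any two diagonal entries have product `1`, so they all agree. Thus `ḡ = ±g`, i.e.
`g` is real or purely imaginary, and the cross-reality condition holds trivially. Conversely,
cross-reality together with the symmetry of `g` cancels the imaginary part of each area-metric
entry in pairs.
-/

namespace Matrix

variable {l m n R : Type*} [CommRing R]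

def minor₂ (g : Matrix m n R) (a b : m) (c d : n) : R := g a c * g b d - g a d * g b c

theorem minor₂_mul [Fintype m] (g : Matrix l m R) (k : Matrix m n R) (a b : l) (e f : n) :
    (g * k).minor₂ a b e f = ∑ c, ∑ d, g.minor₂ a b c d * k c e * k d f := by
  simp only [minor₂, mul_apply, Finset.sum_mul, Finset.mul_sum, sub_mul, Finset.sum_sub_distrib]
  congr 1
  · rw [Finset.sum_comm]
    exact Finset.sum_congr rfl fun _ _ => Finset.sum_congr rfl fun _ _ => by ring
  · exact Finset.sum_congr rfl fun _ _ => Finset.sum_congr rfl fun _ _ => by ring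

theorem minor₂_mul_congr [Fintype m] {g g' : Matrix l m R}
    (h : ∀ a b c d, g.minor₂ a b c d = g'.minor₂ a b c d) (k : Matrix m n R) (a b : l) (e f : n) :
    (g * k).minor₂ a b e f = (g' * k).minor₂ a b e f := by
  simp only [minor₂_mul, h]

section MinorsOfOne

variable [DecidableEq n] {B : Matrix n n R}
  (hB : ∀ a b c d, B.minor₂ a b c d = (1 : Matrix n n R).minor₂ a b c d)
include hB

theorem apply_eq_zero_of_minor₂_eq_one {a e f : n} (hea : e ≠ a) (hef : e ≠ f) (haf : a ≠ f) :
    B a f = 0 := by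
  have h₁ := hB a e f e
  have h₂ := hB a f e f
  have h₃ := hB e f e f
  simp only [minor₂, one_apply_eq, one_apply_ne hea.symm, one_apply_ne hef,
    one_apply_ne hef.symm, one_apply_ne haf] at h₁ h₂ h₃
  linear_combination -B a f * h₃ + B f f * h₁ + B e f * h₂

theorem apply_self_mul_apply_self_of_minor₂_eq_one {i j k : n} (hji : j ≠ i) (hjk : j ≠ k)
    (hik : i ≠ k) : B i i * B k k = 1 := by
  have h := hB i k i k
  simp only [minor₂, one_apply_eq, one_apply_ne hik, one_apply_ne hik.symm,
    apply_eq_zero_of_minor₂_eq_one hB hji hjk hik,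
    apply_eq_zero_of_minor₂_eq_one hB hjk hji hik.symm] at h
  linear_combination h

theorem apply_self_eq_of_minor₂_eq_one {i j k : n} (hij : i ≠ j) (hik : i ≠ k) (hjk : j ≠ k) :
    B i i = B j j := by
  have hi := apply_self_mul_apply_self_of_minor₂_eq_one hB hij.symm hjk hik
  have hj := apply_self_mul_apply_self_of_minor₂_eq_one hB hij hik hjk
  linear_combination B j j * hi - B i i * hj

theorem eq_one_or_eq_neg_one_of_minor₂_eq_one [Fintype n] [NoZeroDivisors R]
    (hn : 2 < Fintype.card n) : B = 1 ∨ B = -1 := by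
  have third (a b : n) : ∃ c, c ≠ a ∧ c ≠ b := by
    obtain ⟨c, hc, hcb⟩ := Finset.exists_mem_ne (s := Finset.univ.erase a)
      (by rw [Finset.card_erase_of_mem (Finset.mem_univ a)]; exact lt_tsub_iff_right.mpr hn) b
    exact ⟨c, Finset.ne_of_mem_erase hc, hcb⟩
  have diag (a b : n) : B a a = B b b := by
    obtain rfl | hab := eq_or_ne a b
    · rfl
    obtain ⟨c, hca, hcb⟩ := third a b
    exact apply_self_eq_of_minor₂_eq_one hB hab hca.symm hcb.symm
  obtain ⟨i, j, k, hij, hik, hjk⟩ := Fintype.two_lt_card_iff.mp hn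
  have hB_eq : B = B i i • 1 := by
    ext a b
    obtain rfl | hab := eq_or_ne a b
    · simp [diag a i]
    obtain ⟨c, hca, hcb⟩ := third a b
    simp [apply_eq_zero_of_minor₂_eq_one hB hca hcb hab, one_apply_ne hab]
  have hsq := apply_self_mul_apply_self_of_minor₂_eq_one hB hij.symm hjk hik
  rw [diag k i] at hsq
  rcases mul_self_eq_one_iff.mp hsq with h | h
  · exact .inl (by rw [hB_eq, h, one_smul])
  · exact .inr (by rw [hB_eq, h, neg_one_smul])

end MinorsOfOne

theorem eq_or_eq_neg_of_minor₂_eq [Fintype n] [DecidableEq n] [NoZeroDivisors R]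
    {g h : Matrix n n R} (hn : 2 < Fintype.card n) (hg : IsUnit g.det)
    (hgh : ∀ a b c d, h.minor₂ a b c d = g.minor₂ a b c d) : h = g ∨ h = -g := by
  have hB a b c d : (h * g⁻¹).minor₂ a b c d = (1 : Matrix n n R).minor₂ a b c d := by
    rw [minor₂_mul_congr hgh, mul_nonsing_inv g hg]
  have hh : h = h * g⁻¹ * g := by rw [mul_assoc, nonsing_inv_mul g hg, mul_one]
  rcases eq_one_or_eq_neg_one_of_minor₂_eq_one hB hn with hB1 | hB1
  · exact .inl (by rw [hh, hB1, one_mul])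
  · exact .inr (by rw [hh, hB1, neg_one_mul])

end Matrix

/-- For a symmetric 4×4 complex matrix `g` with nonzero determinant,
writing `gR a b = (g a b).re` and `gI a b = (g a b).im`, the area metric of `g`
is real iff the cross-reality condition `gR a c * gI d b = gR a d * gI c b`
holds for all indices. -/
theorem area_metric_real_iff_cross_reality
    (g : Matrix (Fin 4) (Fin 4) ℂ) (hsymm : g.IsSymm) (hdet : g.det ≠ 0) :
    (∀ a b c d : Fin 4, (g a c * g d b - g a d * g c b).im = 0) ↔
      (∀ a b c d : Fin 4,
        (g a c).re * (g d b).im = (g a d).re * (g c b).im) := by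
  constructor
  · intro hreal
    have hminors a b c d : (g.map (starRingEnd ℂ)).minor₂ a b c d = g.minor₂ a b c d := by
      have h := Complex.conj_eq_iff_im.mpr (hreal a b c d)
      rw [hsymm.apply b d, hsymm.apply b c] at h
      simpa [Matrix.minor₂] using h
    rcases Matrix.eq_or_eq_neg_of_minor₂_eq (by simp) hdet.isUnit hminors with h | h
    · have him p q : (g p q).im = 0 := Complex.conj_eq_iff_im.mp (congrFun₂ h p q)
      simp [him]
    · have hre p q : (g p q).re = 0 := by
        have := congrArg Complex.re (congrFun₂ h p q)
        simp only [Matrix.map_apply, Complex.conj_re, Matrix.neg_apply, Complex.neg_re] at this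
        linarith
      simp [hre]
  · intro hcross a b c d
    have h₁ := hcross a b c d
    have h₂ := hcross b a d c
    rw [hsymm.apply d b, hsymm.apply a c, hsymm.apply c b, hsymm.apply a d] at h₂
    simp only [Complex.sub_im, Complex.mul_im]
    linarith
end

section
/- Let g be a symmetric 4×4 complex matrix, g = gR + i·gI, satisfying the cross-reality condition gR a c · gI d b = gR a d · gI c b for all indices a, b, c, d. Then det g = det gR + det gI. -/
/-!
If `gI ≠ 0`, the cross-reality condition expresses every column of `gR` as a multiple of a single
column, and symmetrically every row of `gI` as a multiple of a single row; so when neither part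
vanishes both have rank at most one, `g = gR + i gI` has rank at most two, and all three
determinants vanish. When one part vanishes the identity is immediate, using `i ^ 4 = 1`.
-/

namespace Matrix

theorem map_vecMulVec {α β : Type*} [Mul α] [Mul β] {m n : Type*} {f : α → β}
    (hf : ∀ x y, f (x * y) = f x * f y) (u : m → α) (v : n → α) :
    (vecMulVec u v).map f = vecMulVec (f ∘ u) (f ∘ v) := by
  ext i j
  simp [vecMulVec_apply, hf]

section Determinant

variable {R : Type*} [CommRing R] [IsDomain R] {m n : Type*} [Fintype m] [Fintype n]
  [DecidableEq n]

theorem det_mul_eq_zero_of_card_lt (A : Matrix n m R) (B : Matrix m n R)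
    (h : Fintype.card m < Fintype.card n) : (A * B).det = 0 := by
  by_contra hAB
  have hrank := rank_of_det_ne_zero hAB
  have hle := (rank_mul_le_right A B).trans (rank_le_card_height B)
  omega

theorem det_vecMulVec_add_vecMulVec (hn : 2 < Fintype.card n) (u v u' v' : n → R) :
    (vecMulVec u v + vecMulVec u' v').det = 0 := by
  have hfactor : vecMulVec u v + vecMulVec u' v' =
      of (fun i k => ![u i, u' i] k) * of (fun k j => ![v j, v' j] k) := by
    ext i j
    simp [mul_apply, vecMulVec_apply, Fin.sum_univ_two]
  rw [hfactor]
  exact det_mul_eq_zero_of_card_lt _ _ (by simpa using hn)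

end Determinant

def CrossReality {α : Type*} [Mul α] {l m n : Type*} (A : Matrix l m α) (B : Matrix m n α) :
    Prop :=
  ∀ a b c d, A a c * B d b = A a d * B c b

namespace CrossReality

variable {K : Type*} [Field K] {l m n : Type*} {A : Matrix l m K} {B : Matrix m n K}

theorem exists_eq_vecMulVec_left (h : CrossReality A B) (hB : B ≠ 0) :
    ∃ u v, A = vecMulVec u v := by
  obtain ⟨d, b, hdb⟩ : ∃ d b, B d b ≠ 0 := by
    by_contra! hzero
    exact hB (ext hzero)
  refine ⟨fun a => A a d, fun c => B c b / B d b, ?_⟩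
  ext a c
  rw [vecMulVec_apply, mul_div_assoc', eq_div_iff hdb]
  exact h a b c d

theorem exists_eq_vecMulVec_right (h : CrossReality A B) (hA : A ≠ 0) :
    ∃ u v, B = vecMulVec u v := by
  obtain ⟨a, c, hac⟩ : ∃ a c, A a c ≠ 0 := by
    by_contra! hzero
    exact hA (ext hzero)
  refine ⟨fun d => A a d / A a c, fun b => B c b, ?_⟩
  ext d b
  rw [vecMulVec_apply, div_mul_eq_mul_div, eq_div_iff hac, mul_comm]
  exact h a b c d

end CrossReality

theorem det_map_ofReal_add_I_smul_of_crossReality {n : Type*} [Fintype n] [DecidableEq n]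
    (hn : 2 < Fintype.card n) {A B : Matrix n n ℝ} (h : CrossReality A B) :
    (A.map ((↑) : ℝ → ℂ) + Complex.I • B.map ((↑) : ℝ → ℂ)).det =
      A.det + Complex.I ^ Fintype.card n * B.det := by
  have : Nontrivial n := Fintype.one_lt_card_iff_nontrivial.mp (by omega)
  have det_map (M : Matrix n n ℝ) : (M.map ((↑) : ℝ → ℂ)).det = M.det :=
    (Complex.ofRealHom.map_det M).symm
  by_cases hB : B = 0
  · subst hB
    simp [det_map]
  by_cases hA : A = 0
  · subst hA
    simp [det_map]
  obtain ⟨u, v, rfl⟩ := h.exists_eq_vecMulVec_left hB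
  obtain ⟨u', v', rfl⟩ := h.exists_eq_vecMulVec_right hA
  rw [map_vecMulVec Complex.ofReal_mul, map_vecMulVec Complex.ofReal_mul, ← smul_vecMulVec,
    det_vecMulVec_add_vecMulVec hn, det_vecMulVec, det_vecMulVec]
  simp

end Matrix

theorem det_eq_det_re_add_det_im_of_cross_reality_general
    (g : Matrix (Fin 4) (Fin 4) ℂ)
    (gR gI : Matrix (Fin 4) (Fin 4) ℝ)
    (hR : ∀ a b : Fin 4, gR a b = (g a b).re)
    (hI : ∀ a b : Fin 4, gI a b = (g a b).im)
    (hcross : ∀ a b c d : Fin 4, gR a c * gI d b = gR a d * gI c b) :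
    g.det = (gR.det : ℂ) + (gI.det : ℂ) := by
  have hg : g = gR.map (↑) + Complex.I • gI.map (↑) := by
    ext a b
    apply Complex.ext <;> simp [hR, hI]
  rw [hg, Matrix.det_map_ofReal_add_I_smul_of_crossReality (by decide) hcross]
  simp [Complex.I_pow_four]

/-- For a symmetric 4×4 complex matrix `g = gR + i·gI` satisfying
the cross-reality condition, `det g = det gR + det gI` (where `gR` and `gI`
are the entrywise real and imaginary parts, real matrices). -/
theorem det_eq_det_re_add_det_im_of_cross_reality
    (g : Matrix (Fin 4) (Fin 4) ℂ) (hsymm : g.IsSymm)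
    (gR gI : Matrix (Fin 4) (Fin 4) ℝ)
    (hR : ∀ a b : Fin 4, gR a b = (g a b).re)
    (hI : ∀ a b : Fin 4, gI a b = (g a b).im)
    (hcross : ∀ a b c d : Fin 4, gR a c * gI d b = gR a d * gI c b) :
    g.det = (gR.det : ℂ) + (gI.det : ℂ) :=
  det_eq_det_re_add_det_im_of_cross_reality_general g gR gI hR hI hcross
end

section
/- Let n ≥ 2 and let gR and gI be real n×n matrices satisfying the cross-reality condition gR a c · gI d b = gR a d · gI c b for all indices a, b, c, d. If gR is invertible, then gI = 0. (Consequently, by symmetry of the condition, if gI is invertible then gR = 0.) -/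
/-!
Fix an entry `gI d b ≠ 0`. The cross-reality condition with these `d, b` says that
`gI d b • gR` is the outer product of the `d`-th column of `gR` with the `b`-th column of
`gI`, so `gR` has rank at most one and is singular as soon as `n ≥ 2`. The condition is
invariant under `(gR, gI) ↦ (gIᵀ, gRᵀ)`, which gives the second half.
-/

namespace Matrix

variable {n R : Type*} [CommRing R]

def IsCrossReality (A B : Matrix n n R) : Prop :=
  ∀ a b c d, A a c * B d b = A a d * B c b

theorem IsCrossReality.transpose_swap {A B : Matrix n n R} (h : IsCrossReality A B) :
    IsCrossReality Bᵀ Aᵀ := fun a b c d => by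
  simp only [transpose_apply]
  linear_combination -h b a c d

theorem IsCrossReality.smul_eq_vecMulVec {A B : Matrix n n R} (h : IsCrossReality A B)
    (d b : n) : B d b • A = vecMulVec (fun a => A a d) (fun c => B c b) := by
  ext a c
  simp only [smul_apply, smul_eq_mul, vecMulVec_apply]
  linear_combination h a b c d

variable [Fintype n] [DecidableEq n] [Nontrivial n] [IsDomain R]

theorem IsCrossReality.eq_zero_of_det_ne_zero {A B : Matrix n n R} (h : IsCrossReality A B)
    (hA : A.det ≠ 0) : B = 0 := by
  ext d b
  have hdet : B d b ^ Fintype.card n * A.det = 0 := by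
    rw [← det_smul, h.smul_eq_vecMulVec d b, det_vecMulVec]
  simpa [hA] using hdet

end Matrix

/-- For `n ≥ 2` and real `n×n` matrices `gR, gI` satisfying the
cross-reality condition `gR a c * gI d b = gR a d * gI c b`, if `gR` is
invertible then `gI = 0`; by symmetry, if `gI` is invertible then `gR = 0`. -/
theorem cross_reality_invertible_implies_other_zero
    (n : ℕ) (hn : 2 ≤ n) (gR gI : Matrix (Fin n) (Fin n) ℝ)
    (hcross : ∀ a b c d : Fin n, gR a c * gI d b = gR a d * gI c b) :
    (IsUnit gR.det → gI = 0) ∧ (IsUnit gI.det → gR = 0) := by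
  have : Nontrivial (Fin n) := Fin.nontrivial_iff_two_le.mpr hn
  have hcross : gR.IsCrossReality gI := hcross
  refine ⟨fun hR => hcross.eq_zero_of_det_ne_zero hR.ne_zero, fun hI => ?_⟩
  have hRt : gR.transpose = 0 := hcross.transpose_swap.eq_zero_of_det_ne_zero <| by
    rwa [Matrix.det_transpose, ← isUnit_iff_ne_zero]
  simpa using congrArg Matrix.transpose hRt
end

section
/- Let g be a symmetric n×n complex matrix of rank at least 2, with g = gR + i·gI, satisfying the cross-reality condition gR a c · gI d b = gR a d · gI c b for all indices a, b, c, d. Then g is real (gI = 0) or g is purely imaginary (gR = 0). -/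
/-!
Read the cross-reality condition at fixed `a, b` as saying that row `a` of `gR` and column `b`
of `gI` are parallel. If `gI` has a nonzero column `v`, every row of `gR` is a multiple of `v`;
if moreover `gR` has a nonzero row, every column of `gI` is a multiple of that row, hence of `v`.
As `gR` is symmetric, its columns are multiples of `v` too, so every column of `g` lies in
`ℂ ∙ v` and `g` has rank at most one.
-/

open Submodule

theorem mem_span_singleton_of_mul_eq_mul {ι K : Type*} [Field K] {x y : ι → K} {k : ι}
    (hy : y k ≠ 0) (h : ∀ c d, x c * y d = x d * y c) : x ∈ K ∙ y :=
  mem_span_singleton.2 ⟨x k / y k, funext fun c => by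
    simp only [Pi.smul_apply, smul_eq_mul]
    field_simp
    linear_combination -h c k⟩

theorem Complex.mem_span_ofReal_of_re_mem_of_im_mem {ι : Type*} {z : ι → ℂ} {v : ι → ℝ}
    (hre : (fun i => (z i).re) ∈ ℝ ∙ v) (him : (fun i => (z i).im) ∈ ℝ ∙ v) :
    z ∈ ℂ ∙ fun i => (v i : ℂ) := by
  obtain ⟨a, ha⟩ := mem_span_singleton.1 hre
  obtain ⟨b, hb⟩ := mem_span_singleton.1 him
  refine mem_span_singleton.2 ⟨a + b * I, funext fun i => Complex.ext ?_ ?_⟩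
  · simpa using congrFun ha i
  · simpa using congrFun hb i

theorem Matrix.rank_le_one_of_col_mem_span_singleton {m n K : Type*} [Fintype n] [Field K]
    {A : Matrix m n K} {v : m → K} (h : ∀ j, A.col j ∈ K ∙ v) : A.rank ≤ 1 := by
  rw [rank_eq_finrank_span_cols]
  calc Module.finrank K (span K (Set.range A.col))
      ≤ Module.finrank K (K ∙ v) := finrank_mono (span_le.2 (Set.range_subset_iff.2 h))
    _ ≤ 1 := by simpa using finrank_span_le_card ({v} : Set (m → K))

/-- A symmetric `n×n` complex matrix of rank at least 2 satisfying
the cross-reality condition (on its entrywise real and imaginary parts) is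
entrywise real or entrywise purely imaginary. -/
theorem cross_reality_rank_ge_two_implies_real_or_imaginary
    (n : ℕ) (g : Matrix (Fin n) (Fin n) ℂ) (hsymm : g.IsSymm)
    (hrank : 2 ≤ g.rank)
    (hcross : ∀ a b c d : Fin n,
      (g a c).re * (g d b).im = (g a d).re * (g c b).im) :
    (∀ a b : Fin n, (g a b).im = 0) ∨ (∀ a b : Fin n, (g a b).re = 0) := by
  by_contra! h
  obtain ⟨⟨p, q, hpq⟩, r, s, hrs⟩ := h
  set v : Fin n → ℝ := fun d => (g d q).im
  have hre_row : ∀ a, (fun c => (g a c).re) ∈ ℝ ∙ v := fun a =>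
    mem_span_singleton_of_mul_eq_mul hpq (hcross a q)
  have hre_col : ∀ b, (fun a => (g a b).re) ∈ ℝ ∙ v := fun b => by
    simpa only [hsymm.apply] using hre_row b
  have him_col : ∀ b, (fun d => (g d b).im) ∈ ℝ ∙ v := fun b =>
    (span_singleton_le_iff_mem _ _).2 (hre_row r) <|
      mem_span_singleton_of_mul_eq_mul hrs fun c d => by linear_combination hcross r b d c
  have hle : g.rank ≤ 1 := Matrix.rank_le_one_of_col_mem_span_singleton fun b =>
    Complex.mem_span_ofReal_of_re_mem_of_im_mem (hre_col b) (him_col b)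
  omega
end

section
/- Let g be a symmetric n×n complex matrix of rank exactly 1, with g = gR + i·gI, satisfying the cross-reality condition gR a c · gI d b = gR a d · gI c b for all indices a, b, c, d. Then there exist a nonzero complex number η and a nonzero real vector α ∈ ℝⁿ such that g a b = η · α a · α b for all indices a, b. -/
/-- A symmetric `n×n` complex matrix of rank exactly 1 satisfying
the cross-reality condition has the form `g a b = η * α a * α b` for some
nonzero complex number `η` and nonzero real vector `α`. -/
theorem cross_reality_rank_one_structure
    (n : ℕ) (g : Matrix (Fin n) (Fin n) ℂ) (hsymm : g.IsSymm)
    (hrank : g.rank = 1)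
    (hcross : ∀ a b c d : Fin n,
      (g a c).re * (g d b).im = (g a d).re * (g c b).im) :
    ∃ (η : ℂ) (α : Fin n → ℝ), η ≠ 0 ∧ α ≠ 0 ∧
      ∀ a b : Fin n, g a b = η * (α a : ℂ) * (α b : ℂ) := by
  have hsym : ∀ a b, g a b = g b a := fun a b => (hsymm.apply a b).symm
  -- rank one gives a spanning vector for the column space
  have hrank' : Module.finrank ℂ (LinearMap.range g.mulVecLin) = 1 := hrank
  obtain ⟨v, hv0, hv⟩ := finrank_eq_one_iff'.mp hrank'
  set u : Fin n → ℂ := (v : Fin n → ℂ) with hu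
  -- every column is a multiple of u
  have hcol : ∀ b, ∃ c : ℂ, ∀ a, g a b = c * u a := by
    intro b
    have hmem : g.mulVec (Pi.single b 1) ∈ LinearMap.range g.mulVecLin :=
      ⟨Pi.single b 1, rfl⟩
    obtain ⟨c, hc⟩ := hv ⟨_, hmem⟩
    refine ⟨c, fun a => ?_⟩
    have h2 := congrFun (congrArg Subtype.val hc) a
    simpa [Matrix.mulVec_single, mul_comm] using h2.symm
  choose c hc using hcol
  -- u somewhere nonzero
  have hu0 : ∃ i, u i ≠ 0 := by
    by_contra h
    push_neg at h
    apply hv0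
    exact Subtype.ext (funext fun i => h i)
  obtain ⟨i, hui⟩ := hu0
  -- some coefficient nonzero, else g = 0 has rank 0
  have hcb : ∃ b, c b ≠ 0 := by
    by_contra h
    push_neg at h
    have hg0 : g = 0 := by
      ext a b
      rw [hc b a, h b, zero_mul, Matrix.zero_apply]
    rw [hg0, Matrix.rank_zero] at hrank
    exact one_ne_zero hrank.symm
  obtain ⟨b₀, hb₀⟩ := hcb
  -- symmetry relations
  have hrel : ∀ a b, c b * u a = c a * u b := by
    intro a b
    rw [← hc b a, ← hc a b, hsym a b]
  -- g i i ≠ 0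
  have hib : g i b₀ ≠ 0 := by rw [hc]; exact mul_ne_zero hb₀ hui
  have hci : c i ≠ 0 := by
    have := hrel i b₀
    intro h
    rw [h, zero_mul] at this
    exact hib (by rw [hc]; exact this)
  set p := i
  have hz : g p p ≠ 0 := by rw [hc]; exact mul_ne_zero hci hui
  -- minor identity
  have hminor : ∀ a b, g a b * g p p = g a p * g b p := by
    intro a b
    rw [hc b a, hc p p, hc p a, hc p b]
    have h1 : c b * u p = c p * u b := hrel p b
    linear_combination (c p * u a) * h1
  clear hrel hc hci hib hb₀ hui hv hv0 hrank hrank'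
  -- real and imaginary parts of the column at p
  set x : Fin n → ℝ := fun a => (g a p).re with hxdef
  set y : Fin n → ℝ := fun a => (g a p).im with hydef
  have hx : ∀ cc dd : Fin n, x cc * y dd = x dd * y cc := by
    intro cc dd
    have h := hcross p p cc dd
    rw [hsym p cc, hsym p dd] at h
    exact h
  by_cases hy : ∀ a, y a = 0
  · -- column at p is real
    have hreal : ∀ a, g a p = ((x a : ℝ) : ℂ) := by
      intro a
      apply Complex.ext
      · simp [hxdef]
      · simpa using hy a
    refine ⟨(g p p)⁻¹, x, inv_ne_zero hz, ?_, ?_⟩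
    · intro h
      apply hz
      have : x p = 0 := congrFun h p
      rw [hreal p, this]; simp
    · intro a b
      have := hminor a b
      rw [hreal a, hreal b] at this
      field_simp
      rw [mul_comm] at this
      linear_combination this
  · push_neg at hy
    obtain ⟨q, hq⟩ := hy
    set lam := x q / y q with hlam
    have hxy : ∀ a, x a = lam * y a := by
      intro a
      have := hx a q
      field_simp [hlam]
      rw [hlam, div_mul_eq_mul_div, eq_div_iff hq]
      linear_combination this
    have hcol2 : ∀ a, g a p = ((lam : ℂ) + Complex.I) * (y a : ℂ) := by
      intro a
      apply Complex.ext
      · simpa using hxy a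
      · simp [hydef]
    have hmu : ((lam : ℂ) + Complex.I) ≠ 0 := by
      intro h
      have := congrArg Complex.im h
      simp at this
    refine ⟨(g p p)⁻¹ * ((lam : ℂ) + Complex.I) ^ 2, y,
      mul_ne_zero (inv_ne_zero hz) (pow_ne_zero 2 hmu), ?_, ?_⟩
    · intro h
      exact hq (congrFun h q)
    · intro a b
      have := hminor a b
      rw [hcol2 a, hcol2 b] at this
      field_simp
      linear_combination this
end

section
/- Let a₁, a₂, a₃, a₄ be a basis of ℂ⁴ (four linearly independent vectors), and let g be their Gram matrix with respect to the standard complex-bilinear dot product, g i j = Σₖ aᵢ(k)·aⱼ(k). Then all scalar products of the associated bivectors, namely the quantities g i k · g j l − g i l · g j k for all indices i, j, k, l, are real if and only if the Gram matrix g is real or purely imaginary. (Note that g is automatically invertible since det g = (det A)² ≠ 0 where A is the matrix with columns aᵢ.) -/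
open Matrix MvPolynomial

set_option maxHeartbeats 1000000
set_option synthInstance.maxHeartbeats 400000

noncomputable section Stmt7Aux

abbrev Stmt7P4 := MvPolynomial (Fin 4) ℂ

namespace Stmt7

lemma det_four (M : Matrix (Fin 4) (Fin 4) ℂ) : M.det =
    M 0 0*M 1 1*M 2 2*M 3 3 - M 0 0*M 1 1*M 2 3*M 3 2 - M 0 0*M 1 2*M 2 1*M 3 3 + M 0 0*M 1 2*M 2 3*M 3 1 + M 0 0*M 1 3*M 2 1*M 3 2 - M 0 0*M 1 3*M 2 2*M 3 1 - M 0 1*M 1 0*M 2 2*M 3 3 + M 0 1*M 1 0*M 2 3*M 3 2 + M 0 1*M 1 2*M 2 0*M 3 3 - M 0 1*M 1 2*M 2 3*M 3 0 - M 0 1*M 1 3*M 2 0*M 3 2 + M 0 1*M 1 3*M 2 2*M 3 0 + M 0 2*M 1 0*M 2 1*M 3 3 - M 0 2*M 1 0*M 2 3*M 3 1 - M 0 2*M 1 1*M 2 0*M 3 3 + M 0 2*M 1 1*M 2 3*M 3 0 + M 0 2*M 1 3*M 2 0*M 3 1 - M 0 2*M 1 3*M 2 1*M 3 0 - M 0 3*M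 1 0*M 2 1*M 3 2 + M 0 3*M 1 0*M 2 2*M 3 1 + M 0 3*M 1 1*M 2 0*M 3 2 - M 0 3*M 1 1*M 2 2*M 3 0 - M 0 3*M 1 2*M 2 0*M 3 1 + M 0 3*M 1 2*M 2 1*M 3 0 := by
  rw [Matrix.det_succ_row_zero]
  simp [Fin.sum_univ_succ, Matrix.det_fin_three, Matrix.submatrix_apply, Fin.succAbove,
    show (Fin.succ 2 : Fin 4) = 3 from rfl, show (Fin.castSucc 2 : Fin 4) = 2 from rfl,
    show ((1:Fin 4) < Fin.succ 2) = True from by simp [Fin.lt_def],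
    show (Fin.succ 0 : Fin 4) = 1 from rfl, show (Fin.succ 1 : Fin 4) = 2 from rfl,
    show (Fin.castSucc 0 : Fin 4) = 0 from rfl, show (Fin.castSucc 1 : Fin 4) = 1 from rfl]
  ring

lemma det3_rank2 {A : Type*} [CommRing A] (a b c d : Fin 3 → A) :
    Matrix.det (Matrix.of fun i j => a i * b j + c i * d j) = 0 := by
  simp [Matrix.det_fin_three]; ring

def e0 (S _R : Fin 3 → Fin 3 → ℂ) : ℂ :=
  S 0 0*S 1 1*S 2 2 - S 0 0*S 1 2*S 2 1 - S 0 1*S 1 0*S 2 2 + S 0 1*S 1 2*S 2 0 + S 0 2*S 1 0*S 2 1 - S 0 2*S 1 1*S 2 0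
def e1 (S R : Fin 3 → Fin 3 → ℂ) : ℂ :=
  S 0 0*S 1 1*R 2 2 + S 0 0*R 1 1*S 2 2 + R 0 0*S 1 1*S 2 2 - S 0 0*S 1 2*R 2 1 - S 0 0*R 1 2*S 2 1 - R 0 0*S 1 2*S 2 1 - S 0 1*S 1 0*R 2 2 - S 0 1*R 1 0*S 2 2 - R 0 1*S 1 0*S 2 2 + S 0 1*S 1 2*R 2 0 + S 0 1*R 1 2*S 2 0 + R 0 1*S 1 2*S 2 0 + S 0 2*S 1 0*R 2 1 + S 0 2*R 1 0*S 2 1 + R 0 2*S 1 0*S 2 1 - S 0 2*S 1 1*R 2 0 - S 0 2*R 1 1*S 2 0 - R 0 2*S 1 1*S 2 0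
def e2 (S R : Fin 3 → Fin 3 → ℂ) : ℂ :=
  S 0 0*R 1 1*R 2 2 + R 0 0*S 1 1*R 2 2 + R 0 0*R 1 1*S 2 2 - S 0 0*R 1 2*R 2 1 - R 0 0*S 1 2*R 2 1 - R 0 0*R 1 2*S 2 1 - S 0 1*R 1 0*R 2 2 - R 0 1*S 1 0*R 2 2 - R 0 1*R 1 0*S 2 2 + S 0 1*R 1 2*R 2 0 + R 0 1*S 1 2*R 2 0 + R 0 1*R 1 2*S 2 0 + S 0 2*R 1 0*R 2 1 + R 0 2*S 1 0*R 2 1 + R 0 2*R 1 0*S 2 1 - S 0 2*R 1 1*R 2 0 - R 0 2*S 1 1*R 2 0 - R 0 2*R 1 1*S 2 0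
def e3 (_S R : Fin 3 → Fin 3 → ℂ) : ℂ :=
  R 0 0*R 1 1*R 2 2 - R 0 0*R 1 2*R 2 1 - R 0 1*R 1 0*R 2 2 + R 0 1*R 1 2*R 2 0 + R 0 2*R 1 0*R 2 1 - R 0 2*R 1 1*R 2 0

lemma det3_expand {A : Type*} [CommRing A] (f : ℂ →+* A) (α β : A) (S R : Fin 3 → Fin 3 → ℂ) :
    Matrix.det (Matrix.of fun i j => α * f (S i j) + β * f (R i j))
      = f (e0 S R) * α^3 + f (e1 S R) * α^2 * β + f (e2 S R) * α * β^2 + f (e3 S R) * β^3 := by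
  simp only [Matrix.det_fin_three, Matrix.of_apply, e0, e1, e2, e3, map_add, _root_.map_mul, map_sub]
  ring

open Polynomial in
lemma cubic_lemma (ρ σ : Stmt7P4) (hσ : σ ≠ 0) (hnp : ∀ lam : ℂ, ρ ≠ MvPolynomial.C lam * σ)
    (c0 c1 c2 c3 : ℂ)
    (h : MvPolynomial.C c0 * ρ^3 + MvPolynomial.C c1 * ρ^2 * σ
        + MvPolynomial.C c2 * ρ * σ^2 + MvPolynomial.C c3 * σ^3 = 0) :
    c0 = 0 ∧ c1 = 0 ∧ c2 = 0 ∧ c3 = 0 := by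
  by_contra hc
  set K := FractionRing Stmt7P4
  let j : Stmt7P4 →+* K := algebraMap Stmt7P4 K
  have hjinj : Function.Injective j := IsFractionRing.injective Stmt7P4 K
  let f : ℂ →+* K := j.comp (MvPolynomial.C : ℂ →+* Stmt7P4)
  have hfinj : Function.Injective f := f.injective
  have hy : j σ ≠ 0 := fun h0 => hσ (hjinj (by simpa using h0))
  have hy3 : (j σ)^3 ≠ 0 := pow_ne_zero _ hy
  have h1 : f c0 * (j ρ)^3 + f c1 * (j ρ)^2 * j σ + f c2 * (j ρ) * (j σ)^2 + f c3 * (j σ)^3 = 0 := by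
    have h' := congrArg j h
    simp only [map_add, _root_.map_mul, map_pow, map_zero] at h'
    exact h'
  set q : K := j ρ / j σ with hq
  have hqσ : q * j σ = j ρ := div_mul_cancel₀ _ hy
  have h2 : f c0 * q^3 + f c1 * q^2 + f c2 * q + f c3 = 0 := by
    have h3 : (f c0 * q^3 + f c1 * q^2 + f c2 * q + f c3) * (j σ)^3 = 0 := by
      calc (f c0 * q^3 + f c1 * q^2 + f c2 * q + f c3) * (j σ)^3
          = f c0 * (q * j σ)^3 + f c1 * (q * j σ)^2 * j σ + f c2 * (q * j σ) * (j σ)^2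
            + f c3 * (j σ)^3 := by ring
        _ = 0 := by rw [hqσ]; exact h1
    exact (mul_eq_zero.mp h3).resolve_right hy3
  set p : Polynomial ℂ := Polynomial.C c0 * Polynomial.X^3 + Polynomial.C c1 * Polynomial.X^2 + Polynomial.C c2 * Polynomial.X + Polynomial.C c3 with hp
  have hpne : p ≠ 0 := by
    intro h0
    apply hc
    refine ⟨?_, ?_, ?_, ?_⟩
    · have := congrArg (fun r => Polynomial.coeff r 3) h0; simpa [hp, Polynomial.coeff_add, Polynomial.coeff_C_mul, Polynomial.coeff_X_pow, Polynomial.coeff_C] using this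
    · have := congrArg (fun r => Polynomial.coeff r 2) h0; simpa [hp, Polynomial.coeff_add, Polynomial.coeff_C_mul, Polynomial.coeff_X_pow, Polynomial.coeff_C] using this
    · have := congrArg (fun r => Polynomial.coeff r 1) h0; simpa [hp, Polynomial.coeff_add, Polynomial.coeff_C_mul, Polynomial.coeff_X_pow, Polynomial.coeff_C] using this
    · have := congrArg (fun r => Polynomial.coeff r 0) h0; simpa [hp, Polynomial.coeff_add, Polynomial.coeff_C_mul, Polynomial.coeff_X_pow, Polynomial.coeff_C] using this
  have hsplit : Polynomial.Splits p := IsAlgClosed.splits p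
  have hfact := Polynomial.Splits.eq_prod_roots hsplit
  have heval : Polynomial.eval₂ f q p = 0 := by
    simp only [hp, Polynomial.eval₂_add, Polynomial.eval₂_mul, Polynomial.eval₂_C,
      Polynomial.eval₂_X, Polynomial.eval₂_pow]
    exact h2
  rw [hfact] at heval
  rw [show Polynomial.eval₂ f q _ = Polynomial.eval₂RingHom f q _ from rfl] at heval
  rw [_root_.map_mul, map_multiset_prod] at heval
  have hlc : f p.leadingCoeff ≠ 0 := fun h0 => (Polynomial.leadingCoeff_ne_zero.mpr hpne) (hfinj (by simpa using h0))
  have hprod : (Multiset.map (fun a => q - f a) p.roots).prod = 0 := by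
    rcases mul_eq_zero.mp heval with h' | h'
    · exact absurd (by simpa using h') hlc
    · simpa [Multiset.map_map, Function.comp] using h'
  have hmem : (0:K) ∈ Multiset.map (fun a => q - f a) p.roots := Multiset.prod_eq_zero_iff.mp hprod
  obtain ⟨lam, _, hlam⟩ := Multiset.mem_map.mp hmem
  apply hnp lam
  apply hjinj
  have hjρ : j ρ = f lam * j σ := by
    rw [← hqσ]
    have hql : q = f lam := by linear_combination hlam
    rw [hql]
  rw [hjρ, j.map_mul]
  rfl

lemma M1 (cR cS : Fin 4 → Fin 4 → ℂ)
    (hkey : ∀ i j k l : Fin 4, (C (cR i k) * C (cS j l) + C (cS i k) * C (cR j l)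
      - C (cR j i) * C (cS l k) - C (cS j i) * C (cR l k) : Stmt7P4) = 0)
    (j l : Fin 4) :
    (∑ t, ∑ u, (X t * X u * C (cR t u) : Stmt7P4)) * C (cS j l)
      + (∑ t, ∑ u, (X t * X u * C (cS t u) : Stmt7P4)) * C (cR j l)
    = (∑ t, C (cR j t) * X t) * (∑ t, C (cS l t) * X t)
      + (∑ t, C (cS j t) * X t) * (∑ t, C (cR l t) * X t) := by
  simp only [Fin.sum_univ_four]
  linear_combination X (σ := Fin 4) (0:Fin 4) * X (0:Fin 4) * hkey 0 j 0 l + X (σ := Fin 4) (0:Fin 4) * X (1:Fin 4) * hkey 0 j 1 l + X (σ := Fin 4) (0:Fin 4) * X (2:Fin 4) * hkey 0 j 2 l + X (σ := Fin 4) (0:Fin 4) * X (3:Fin 4) * hkey 0 j 3 l + X (σ := Fin 4) (1:Fin 4) * X (0:Fin 4) * hkey 1 j 0 l + X (σ := Fin 4) (1:Fin 4) * X (1:Fin 4) * hkey 1 j 1 l + X (σ := Fin 4) (1:Fin 4) * X (2:Fin 4) * hkey 1 j 2 l + X (σ := Fin 4) (1:Fin 4) * X (3:Fin 4) * hkey 1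 j 3 l + X (σ := Fin 4) (2:Fin 4) * X (0:Fin 4) * hkey 2 j 0 l + X (σ := Fin 4) (2:Fin 4) * X (1:Fin 4) * hkey 2 j 1 l + X (σ := Fin 4) (2:Fin 4) * X (2:Fin 4) * hkey 2 j 2 l + X (σ := Fin 4) (2:Fin 4) * X (3:Fin 4) * hkey 2 j 3 l + X (σ := Fin 4) (3:Fin 4) * X (0:Fin 4) * hkey 3 j 0 l + X (σ := Fin 4) (3:Fin 4) * X (1:Fin 4) * hkey 3 j 1 l + X (σ := Fin 4) (3:Fin 4) * X (2:Fin 4) * hkey 3 j 2 l + X (σ := Fin 4) (3:Fin 4) * X (3:Fin 4) * hkey 3 j 3 l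

lemma detA_ne (a : Fin 4 → (Fin 4 → ℂ)) (hbasis : LinearIndependent ℂ a) :
    (Matrix.of a).det ≠ 0 := by
  intro hdet
  obtain ⟨v, hv, hmul⟩ := Matrix.exists_vecMul_eq_zero_iff.mpr hdet
  apply hv
  funext i
  refine Fintype.linearIndependent_iff.mp hbasis v ?_ i
  funext k
  have := congrFun hmul k
  simpa [Matrix.vecMul, dotProduct, Finset.sum_apply, Pi.smul_apply, smul_eq_mul] using this

def ee (i t : Fin 4) : ℂ := if t = i then 1 else 0

lemma sum_single (i : Fin 4) (y : Fin 4 → ℂ) :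
    ∑ t, ee i t * y t = y i := by
  rw [Finset.sum_eq_single i]
  · simp [ee]
  · intro b _ hb; simp [ee, if_neg hb]
  · intro h; exact absurd (Finset.mem_univ i) h

lemma quad_eval_single (M : Fin 4 → Fin 4 → ℂ) (i : Fin 4) :
    ∑ t, ∑ u, ee i t * ee i u * M t u = M i i := by
  calc ∑ t, ∑ u, ee i t * ee i u * M t u
      = ∑ t, ee i t * (∑ u, ee i u * M t u) := by
        refine Finset.sum_congr rfl fun t _ => ?_
        rw [Finset.mul_sum]; exact Finset.sum_congr rfl fun u _ => by ring
    _ = ∑ u, ee i u * M i u := sum_single i _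
    _ = M i i := sum_single i _

lemma quad_eval_pair (M : Fin 4 → Fin 4 → ℂ) (i j : Fin 4) :
    ∑ t, ∑ u, (ee i t + ee j t) * (ee i u + ee j u) * M t u
      = M i i + M i j + M j i + M j j := by
  have expand : ∀ t, ∑ u, (ee i t + ee j t) * (ee i u + ee j u) * M t u
      = ee i t * (∑ u, ee i u * M t u) + ee i t * (∑ u, ee j u * M t u)
        + ee j t * (∑ u, ee i u * M t u) + ee j t * (∑ u, ee j u * M t u) := by
    intro t
    rw [Finset.mul_sum, Finset.mul_sum, Finset.mul_sum, Finset.mul_sum, ← Finset.sum_add_distrib,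
      ← Finset.sum_add_distrib, ← Finset.sum_add_distrib]
    exact Finset.sum_congr rfl fun u _ => by ring
  rw [Finset.sum_congr rfl fun t _ => expand t]
  rw [Finset.sum_add_distrib, Finset.sum_add_distrib, Finset.sum_add_distrib]
  rw [sum_single i, sum_single i, sum_single j, sum_single j, sum_single i, sum_single j,
    sum_single i, sum_single j]

end Stmt7

end Stmt7Aux

/-- For a basis `a₁,…,a₄` of `ℂ⁴` with Gram matrix
`g i j = ∑ k, aᵢ k * aⱼ k` (complex-bilinear dot product), all bivector scalar
products `g i k * g j l - g i l * g j k` are real iff `g` is entrywise real or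
entrywise purely imaginary. -/
theorem bivector_products_real_iff_gram_real_or_imaginary
    (a : Fin 4 → (Fin 4 → ℂ)) (hbasis : LinearIndependent ℂ a)
    (g : Matrix (Fin 4) (Fin 4) ℂ)
    (hg : ∀ i j : Fin 4, g i j = ∑ k : Fin 4, a i k * a j k) :
    (∀ i j k l : Fin 4, (g i k * g j l - g i l * g j k).im = 0) ↔
      ((∀ i j : Fin 4, (g i j).im = 0) ∨ (∀ i j : Fin 4, (g i j).re = 0)) := by
  classical
  constructor
  · intro hE
    by_cases hS0 : ∀ i j, (g i j).im = 0
    · exact Or.inl hS0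
    by_cases hR0 : ∀ i j, (g i j).re = 0
    · exact Or.inr hR0
    exfalso
    push_neg at hS0 hR0
    obtain ⟨sp, sq, hSpq⟩ := hS0
    obtain ⟨rp, rq, hRpq⟩ := hR0
    have hsym : ∀ i j, g i j = g j i := fun i j => by
      rw [hg, hg]; exact Finset.sum_congr rfl fun k _ => mul_comm _ _
    have hdet : g.det ≠ 0 := by
      have hA := Stmt7.detA_ne a hbasis
      have hfac : g = Matrix.of a * (Matrix.of a)ᵀ := by
        refine Matrix.ext fun i j => ?_
        rw [Matrix.mul_apply, hg]
        exact Finset.sum_congr rfl fun k _ => rfl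
      rw [hfac, Matrix.det_mul, Matrix.det_transpose]
      exact mul_ne_zero hA hA
    set cR : Fin 4 → Fin 4 → ℂ := fun i j => ((g i j).re : ℂ) with hcR
    set cS : Fin 4 → Fin 4 → ℂ := fun i j => ((g i j).im : ℂ) with hcS
    have hgRS : ∀ i j, g i j = cR i j + Complex.I * cS i j := by
      intro i j
      rw [hcR, hcS]
      simp only
      rw [mul_comm]
      exact (Complex.re_add_im _).symm
    have hRsym : ∀ i j, cR i j = cR j i := fun i j => by
      rw [hcR]; simp only; rw [hsym i j]
    have hSsym : ∀ i j, cS i j = cS j i := fun i j => by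
      rw [hcS]; simp only; rw [hsym i j]
    have hkeyC : ∀ i j k l, cR i k * cS j l + cS i k * cR j l
        - cR j i * cS l k - cS j i * cR l k = 0 := by
      intro i j k l
      have h := hE k j i l
      rw [hsym k i, hsym k l] at h
      simp only [Complex.sub_im, Complex.mul_im] at h
      have h2 := congrArg (fun r : ℝ => (r : ℂ)) h
      push_cast at h2
      rw [hcR, hcS]
      simp only
      linear_combination h2
    have hkeyP : ∀ i j k l, (C (cR i k) * C (cS j l) + C (cS i k) * C (cR j l)
        - C (cR j i) * C (cS l k) - C (cS j i) * C (cR l k) : Stmt7P4) = 0 := by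
      intro i j k l
      have h2 := congrArg (MvPolynomial.C (σ := Fin 4)) (hkeyC i j k l)
      simpa only [map_add, _root_.map_mul, map_sub, map_zero] using h2
    have hM1 := Stmt7.M1 cR cS hkeyP
    set ρ : Stmt7P4 := ∑ t, ∑ u, X t * X u * C (cR t u) with hρdef
    set σp : Stmt7P4 := ∑ t, ∑ u, X t * X u * C (cS t u) with hσdef
    have hevalρ : ∀ x : Fin 4 → ℂ, MvPolynomial.eval x ρ = ∑ t, ∑ u, x t * x u * cR t u := by
      intro x
      rw [hρdef]
      simp [map_sum, _root_.map_mul, MvPolynomial.eval_X, MvPolynomial.eval_C]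
    have hevalσ : ∀ x : Fin 4 → ℂ, MvPolynomial.eval x σp = ∑ t, ∑ u, x t * x u * cS t u := by
      intro x
      rw [hσdef]
      simp [map_sum, _root_.map_mul, MvPolynomial.eval_X, MvPolynomial.eval_C]
    have hSne : ∃ x : Fin 4 → ℂ, (∑ t, ∑ u, x t * x u * cS t u) ≠ 0 := by
      have hSpq' : cS sp sq ≠ 0 := by
        rw [hcS]; simp only; exact_mod_cast Complex.ofReal_ne_zero.mpr hSpq
      by_cases hd : sp = sq
      · exact ⟨Stmt7.ee sp, by rw [Stmt7.quad_eval_single]; rw [hd] at hSpq' ⊢; exact hSpq'⟩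
      by_cases hdp : cS sp sp ≠ 0
      · exact ⟨Stmt7.ee sp, by rw [Stmt7.quad_eval_single]; exact hdp⟩
      by_cases hdq : cS sq sq ≠ 0
      · exact ⟨Stmt7.ee sq, by rw [Stmt7.quad_eval_single]; exact hdq⟩
      push_neg at hdp hdq
      refine ⟨fun t => Stmt7.ee sp t + Stmt7.ee sq t, ?_⟩
      rw [Stmt7.quad_eval_pair, hdp, hdq, hSsym sq sp]
      intro hcon
      exact hSpq' (by linear_combination (1/2)*hcon)
    have hσne : σp ≠ 0 := by
      obtain ⟨x, hx⟩ := hSne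
      intro h0
      apply hx
      rw [← hevalσ x, h0, map_zero]
    by_cases hprop : ∃ lam : ℂ, ρ = MvPolynomial.C lam * σp
    · -- proportional case
      obtain ⟨lam, hlam⟩ := hprop
      have hquad : ∀ x : Fin 4 → ℂ, (∑ t, ∑ u, x t * x u * cR t u)
          = lam * ∑ t, ∑ u, x t * x u * cS t u := by
        intro x
        have h2 := congrArg (MvPolynomial.eval x) hlam
        rw [_root_.map_mul, MvPolynomial.eval_C, hevalρ, hevalσ] at h2
        exact h2
      have hRlamS : ∀ i j, cR i j = lam * cS i j := by
        intro i j
        by_cases hij : i = j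
        · subst hij
          have h1 := hquad (Stmt7.ee i)
          rw [Stmt7.quad_eval_single, Stmt7.quad_eval_single] at h1
          exact h1
        · have h1 := hquad (fun t => Stmt7.ee i t + Stmt7.ee j t)
          rw [Stmt7.quad_eval_pair, Stmt7.quad_eval_pair] at h1
          have h2 := hquad (Stmt7.ee i)
          rw [Stmt7.quad_eval_single, Stmt7.quad_eval_single] at h2
          have h3 := hquad (Stmt7.ee j)
          rw [Stmt7.quad_eval_single, Stmt7.quad_eval_single] at h3
          linear_combination (1/2)*h1 - (1/2)*h2 - (1/2)*h3 + (1/2)*(hRsym i j) - (lam/2)*(hSsym i j)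
      -- lam is real
      have hSpq' : cS sp sq ≠ 0 := by
        rw [hcS]; simp only; exact_mod_cast Complex.ofReal_ne_zero.mpr hSpq
      set c : ℝ := (g sp sq).re / (g sp sq).im with hc
      have hlamc : lam = (c : ℂ) := by
        have h1 := hRlamS sp sq
        simp only [hcR, hcS] at h1
        have him : ((g sp sq).im : ℂ) ≠ 0 := Complex.ofReal_ne_zero.mpr hSpq
        rw [hc]
        push_cast
        rw [eq_div_iff him]
        linear_combination -h1
      have hcne : (c:ℂ) ≠ 0 := by
        intro h0
        apply hRpq
        have h1 := hRlamS rp rq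
        rw [hlamc, h0, zero_mul] at h1
        rw [hcR] at h1
        simp only at h1
        exact_mod_cast h1
      have hgc : ∀ i j, g i j = ((c:ℂ) + Complex.I) * cS i j := by
        intro i j
        rw [hgRS i j, hRlamS i j, hlamc]
        ring
      have hminor : ∀ k l, cS 0 k * cS 1 l - cS 0 l * cS 1 k = 0 := by
        intro k l
        have h := hE 0 1 k l
        rw [hgc 0 k, hgc 1 l, hgc 0 l, hgc 1 k] at h
        rw [hcS] at h ⊢
        simp only at h ⊢
        simp only [Complex.sub_im, Complex.mul_im, Complex.mul_re, Complex.add_re,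
          Complex.add_im, Complex.ofReal_re, Complex.ofReal_im, Complex.I_re, Complex.I_im] at h
        have hcr : c ≠ 0 := by exact_mod_cast hcne
        have h2 : (2*c) * ((g 0 k).im * (g 1 l).im - (g 0 l).im * (g 1 k).im) = 0 := by
          linear_combination h
        have h3 := (mul_eq_zero.mp h2).resolve_left (by intro h4; apply hcr; linarith)
        exact_mod_cast congrArg (fun r : ℝ => (r:ℂ)) h3
      have hdetS : (Matrix.of (fun i j => cS i j)).det = 0 := by
        rw [Stmt7.det_four]
        simp only [Matrix.of_apply]
        linear_combination (cS 2 2 * cS 3 3 - cS 2 3 * cS 3 2) * hminor 0 1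
          - (cS 2 1 * cS 3 3 - cS 2 3 * cS 3 1) * hminor 0 2
          + (cS 2 1 * cS 3 2 - cS 2 2 * cS 3 1) * hminor 0 3
          + (cS 2 0 * cS 3 3 - cS 2 3 * cS 3 0) * hminor 1 2
          - (cS 2 0 * cS 3 2 - cS 2 2 * cS 3 0) * hminor 1 3
          + (cS 2 0 * cS 3 1 - cS 2 1 * cS 3 0) * hminor 2 3
      apply hdet
      have hgmat : g = ((c:ℂ) + Complex.I) • Matrix.of (fun i j => cS i j) := by
        refine Matrix.ext fun i j => ?_
        rw [Matrix.smul_apply, Matrix.of_apply, hgc i j]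
        simp [smul_eq_mul]
      rw [hgmat, Matrix.det_smul, hdetS]
      simp
    · -- non-proportional case
      push_neg at hprop
      have minor3 : ∀ (pr qc : Fin 3 → Fin 4),
          Matrix.det (Matrix.of fun i j : Fin 3 => g (pr i) (qc j)) = 0 := by
        intro pr qc
        have hTzero : Matrix.det (Matrix.of fun i j : Fin 3 =>
            ρ * C (cS (pr i) (qc j)) + σp * C (cR (pr i) (qc j))) = 0 := by
          have hmeq : (Matrix.of fun i j : Fin 3 =>
              ρ * C (cS (pr i) (qc j)) + σp * C (cR (pr i) (qc j)))
              = Matrix.of (fun i j : Fin 3 =>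
                (∑ t, C (cR (pr i) t) * X t) * (∑ t, C (cS (qc j) t) * X t)
                + (∑ t, C (cS (pr i) t) * X t) * (∑ t, C (cR (qc j) t) * X t)) := by
            refine Matrix.ext fun i j => ?_
            simp only [Matrix.of_apply]
            exact hM1 (pr i) (qc j)
          rw [hmeq]
          exact Stmt7.det3_rank2 _ _ _ _
        rw [Stmt7.det3_expand (MvPolynomial.C : ℂ →+* Stmt7P4) ρ σp
          (fun i j => cS (pr i) (qc j)) (fun i j => cR (pr i) (qc j))] at hTzero
        obtain ⟨h0, h1, h2, h3⟩ := Stmt7.cubic_lemma ρ σp hσne hprop _ _ _ _ hTzero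
        have hex := Stmt7.det3_expand (RingHom.id ℂ) Complex.I 1
          (fun i j => cS (pr i) (qc j)) (fun i j => cR (pr i) (qc j))
        rw [h0, h1, h2, h3] at hex
        have hgsub : (Matrix.of fun i j : Fin 3 => g (pr i) (qc j))
            = Matrix.of (fun i j : Fin 3 => Complex.I * (RingHom.id ℂ) (cS (pr i) (qc j))
              + 1 * (RingHom.id ℂ) (cR (pr i) (qc j))) := by
          refine Matrix.ext fun i j => ?_
          simp only [Matrix.of_apply, RingHom.id_apply]
          rw [hgRS (pr i) (qc j)]
          ring
        rw [hgsub, hex]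
        simp
      have hm0 := minor3 ![1,2,3] ![1,2,3]
      have hm1 := minor3 ![0,2,3] ![1,2,3]
      have hm2 := minor3 ![0,1,3] ![1,2,3]
      have hm3 := minor3 ![0,1,2] ![1,2,3]
      apply hdet
      rw [Stmt7.det_four]
      simp only [Matrix.det_fin_three, Matrix.of_apply,
        show (![1,2,3] : Fin 3 → Fin 4) 0 = 1 from rfl,
        show (![1,2,3] : Fin 3 → Fin 4) 1 = 2 from rfl,
        show (![1,2,3] : Fin 3 → Fin 4) 2 = 3 from rfl,
        show (![0,2,3] : Fin 3 → Fin 4) 0 = 0 from rfl,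
        show (![0,2,3] : Fin 3 → Fin 4) 1 = 2 from rfl,
        show (![0,2,3] : Fin 3 → Fin 4) 2 = 3 from rfl,
        show (![0,1,3] : Fin 3 → Fin 4) 0 = 0 from rfl,
        show (![0,1,3] : Fin 3 → Fin 4) 1 = 1 from rfl,
        show (![0,1,3] : Fin 3 → Fin 4) 2 = 3 from rfl,
        show (![0,1,2] : Fin 3 → Fin 4) 0 = 0 from rfl,
        show (![0,1,2] : Fin 3 → Fin 4) 1 = 1 from rfl,
        show (![0,1,2] : Fin 3 → Fin 4) 2 = 2 from rfl] at hm0 hm1 hm2 hm3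
      linear_combination g 0 0 * hm0 - g 1 0 * hm1 + g 2 0 * hm2 - g 3 0 * hm3
  · intro hor i j k l
    rcases hor with h | h
    · simp [Complex.sub_im, Complex.mul_im, h i k, h j l, h i l, h j k]
    · simp [Complex.sub_im, Complex.mul_im, h i k, h j l, h i l, h j k]
end

section
/- Let g and h be invertible real symmetric 4×4 matrices whose area metrics coincide: g a c · g d b − g a d · g c b = h a c · h d b − h a d · h c b for all indices a, b, c, d. Then h = g or h = −g. (The area metric contains the full information about the metric up to a sign.) -/
/-!
Contracting the area metric of `M` with a matrix `k` over its middle index pair gives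
`M k Mᵀ - tr(k Mᵀ) M`. For symmetric `g`, `h` with the same area metric, taking `k = g⁻¹`
gives `h g⁻¹ h = tr(g⁻¹ h) h - (n - 1) g`, so `A = g⁻¹ h` satisfies `A² = tr(A) A - (n - 1)`,
and likewise its inverse `h⁻¹ g`. Two such quadratic relations for mutually inverse elements
combine into a linear one, which forces `A = c • 1` once `(n - 1)² ≠ 1`; the relation for
`A` then reads `(n - 1) c² = n - 1`.
-/

open Matrix

def areaMetric {ι R : Type*} [Mul R] [Sub R] (g : Matrix ι ι R) (a b c d : ι) : R :=
  g a c * g d b - g a d * g c b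

theorem exists_eq_smul_one_of_mul_eq_one {K A : Type*} [Field K] [Ring A] [Algebra K A]
    {a b : A} {s t m : K} (hab : a * b = 1) (ha : a ^ 2 = s • a - m • 1)
    (hb : b ^ 2 = t • b - m • 1) (hm : m ^ 2 ≠ 1) :
    ∃ c : K, b = c • 1 := by
  have hlin : (t - m * s) • a = (1 - m ^ 2) • 1 := by
    have h2 : a ^ 2 * b ^ 2 = 1 := by rw [sq, sq, mul_assoc, ← mul_assoc a b, hab, one_mul, hab]
    rw [hb, mul_sub, mul_smul_comm, mul_smul_comm, sq a, mul_assoc, hab, mul_one, mul_one, ← sq,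
      ha] at h2
    linear_combination (norm := module) h2
  refine ⟨(t - m * s) / (1 - m ^ 2), ?_⟩
  have hb' := congrArg (· * b) hlin
  simp only [smul_mul_assoc, hab, one_mul] at hb'
  rw [div_eq_inv_mul, mul_smul, hb', smul_smul, inv_mul_cancel₀ (sub_ne_zero.mpr hm.symm),
    one_smul]

section CommRing

variable {ι R : Type*} [Fintype ι] [CommRing R]

theorem areaMetric_contract (k M : Matrix ι ι R) :
    Matrix.of (fun a d => ∑ c, ∑ b, k c b * areaMetric M a b c d) =
      M * k * Mᵀ - (k * Mᵀ).trace • M := by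
  ext a d
  simp only [areaMetric, of_apply, Matrix.sub_apply, Matrix.smul_apply, smul_eq_mul, mul_apply,
    trace, diag_apply, transpose_apply, mul_sub, Finset.sum_sub_distrib, Finset.sum_mul]
  congr 1
  · rw [Finset.sum_comm]
    exact Finset.sum_congr rfl fun _ _ => Finset.sum_congr rfl fun _ _ => by ring
  · exact Finset.sum_congr rfl fun _ _ => Finset.sum_congr rfl fun _ _ => by ring

variable [DecidableEq ι] {g h : Matrix ι ι R}

theorem mul_inv_mul_eq_of_areaMetric_eq (hg : g.IsSymm) (hh : h.IsSymm) (hg_det : IsUnit g.det)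
    (hgh : areaMetric g = areaMetric h) :
    h * g⁻¹ * h = (g⁻¹ * h).trace • h - (Fintype.card ι - 1 : R) • g := by
  have key := areaMetric_contract g⁻¹ g
  rw [hgh, areaMetric_contract, hg.eq, hh.eq, mul_nonsing_inv g hg_det, one_mul,
    nonsing_inv_mul g hg_det, trace_one] at key
  linear_combination (norm := module) key

theorem inv_mul_sq_eq_of_areaMetric_eq (hg : g.IsSymm) (hh : h.IsSymm) (hg_det : IsUnit g.det)
    (hgh : areaMetric g = areaMetric h) :
    (g⁻¹ * h) ^ 2 = (g⁻¹ * h).trace • (g⁻¹ * h) - (Fintype.card ι - 1 : R) • 1 := by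
  rw [sq, mul_assoc, ← mul_assoc h, mul_inv_mul_eq_of_areaMetric_eq hg hh hg_det hgh, mul_sub,
    Matrix.mul_smul, Matrix.mul_smul, nonsing_inv_mul g hg_det]

end CommRing

section Field

variable {ι K : Type*} [Fintype ι] [DecidableEq ι] [Field K]

theorem eq_one_or_eq_neg_one_of_smul_one_sq_eq [Nonempty ι] {c : K}
    (hn : (Fintype.card ι : K) ≠ 1)
    (hc : (c • 1 : Matrix ι ι K) ^ 2 =
      (c • 1 : Matrix ι ι K).trace • (c • 1) - (Fintype.card ι - 1 : K) • 1) :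
    c = 1 ∨ c = -1 := by
  obtain ⟨i⟩ := ‹Nonempty ι›
  have hii := congrFun (congrFun hc i) i
  simp only [smul_pow, one_pow, trace_smul, trace_one, Matrix.smul_apply, Matrix.sub_apply,
    one_apply_eq, smul_eq_mul, mul_one] at hii
  have hfactor : ((Fintype.card ι : K) - 1) * (c ^ 2 - 1) = 0 := by linear_combination -hii
  rw [← sq_eq_one_iff, ← sub_eq_zero]
  exact (mul_eq_zero.mp hfactor).resolve_left (sub_ne_zero.mpr hn)

theorem eq_or_eq_neg_of_areaMetric_eq [CharZero K] (hn : 3 ≤ Fintype.card ι)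
    {g h : Matrix ι ι K} (hg : g.IsSymm) (hh : h.IsSymm) (hg_det : IsUnit g.det)
    (hh_det : IsUnit h.det) (hgh : areaMetric g = areaMetric h) :
    h = g ∨ h = -g := by
  have : Nonempty ι := Fintype.card_pos_iff.mp (by omega)
  have hA := inv_mul_sq_eq_of_areaMetric_eq hg hh hg_det hgh
  have hB := inv_mul_sq_eq_of_areaMetric_eq hh hg hh_det hgh.symm
  have hm : ((Fintype.card ι : K) - 1) ^ 2 ≠ 1 := by
    rw [Ne, sq_eq_one_iff, sub_eq_iff_eq_add, sub_eq_iff_eq_add, neg_add_cancel,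
      one_add_one_eq_two]
    exact_mod_cast (by omega : ¬(Fintype.card ι = 2 ∨ Fintype.card ι = 0))
  have hBA : h⁻¹ * g * (g⁻¹ * h) = 1 := by
    rw [mul_assoc, mul_nonsing_inv_cancel_left g h hg_det, nonsing_inv_mul h hh_det]
  obtain ⟨c, hc⟩ := exists_eq_smul_one_of_mul_eq_one hBA hB hA hm
  have hh_eq : h = c • g := by
    rw [← mul_nonsing_inv_cancel_left g h hg_det, hc, Matrix.mul_smul, mul_one]
  have hn1 : (Fintype.card ι : K) ≠ 1 := by exact_mod_cast (by omega : Fintype.card ι ≠ 1)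
  rcases eq_one_or_eq_neg_one_of_smul_one_sq_eq hn1 (hc ▸ hA) with rfl | rfl <;> simp [hh_eq]

end Field

/-- Two invertible real symmetric 4×4 matrices with the same
area metric agree up to an overall sign. -/
theorem area_metric_determines_metric_up_to_sign
    (g h : Matrix (Fin 4) (Fin 4) ℝ)
    (hgsymm : g.IsSymm) (hhsymm : h.IsSymm)
    (hginv : IsUnit g.det) (hhinv : IsUnit h.det)
    (harea : ∀ a b c d : Fin 4,
      g a c * g d b - g a d * g c b = h a c * h d b - h a d * h c b) :
    h = g ∨ h = -g :=
  eq_or_eq_neg_of_areaMetric_eq (by simp) hgsymm hhsymm hginv hhinv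
    (funext₂ fun a b => funext₂ fun c d => harea a b c d)
end
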